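/- Theorem 2 (the glass entropy stays above the supercooled-liquid entropy). Let T_0 > 0, a ∈ ℝ, and L ∈ ℝ. Let S, E : ℝ → ℝ be differentiable on [a, ∞) and T : ℝ → ℝ with T(t) > 0 for all t ≥ a. Assume for every t ≥ a: E'(t) < 0, (1/T(t) − 1/T_0)·E'(t) > 0, and (T_0 − T(t))·S'(t) > 0, and assume S(t) → L as t → ∞. Then for every t ≥ a: T(t) > T_0, S'(t) < 0, and S(t) > L. -/

import Mathlib

open Set Filter Topology

/-!
The two strict second-law inequalities fix signs one after the other: since `E' < 0`, the first
forces `1 / T < 1 / T₀`, i.e. `T > T₀`; then the second forces `S' < 0`. So `S` is strictly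
decreasing on `[a, ∞)`, and a strictly decreasing function stays strictly above its limit.
-/

theorem strictAntiOn_of_hasDerivWithinAt_neg_of_convex {D : Set ℝ} (hD : Convex ℝ D)
    {f f' : ℝ → ℝ} (hf : ∀ x ∈ D, HasDerivWithinAt f (f' x) D x) (hf' : ∀ x ∈ D, f' x < 0) :
    StrictAntiOn f D :=
  strictAntiOn_of_hasDerivWithinAt_neg hD (fun x hx ↦ (hf x hx).continuousWithinAt)
    (fun x hx ↦ ((hf x (interior_subset hx)).hasDerivAt
      (mem_interior_iff_mem_nhds.1 hx)).hasDerivWithinAt)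
    (fun x hx ↦ hf' x (interior_subset hx))

theorem StrictAntiOn.lt_of_tendsto_atTop {β α : Type*} [LinearOrder β] [NoMaxOrder β]
    [LinearOrder α] [TopologicalSpace α] [OrderClosedTopology α] {f : β → α} {a t : β} {l : α}
    (hf : StrictAntiOn f (Ici a)) (hl : Tendsto f atTop (𝓝 l)) (ht : a ≤ t) : l < f t := by
  have : Nonempty β := ⟨a⟩
  obtain ⟨u, htu⟩ := exists_gt t
  have hau : a ≤ u := ht.trans htu.le
  have hlu : l ≤ f u := le_of_tendsto hl <| (eventually_ge_atTop u).mono fun v huv ↦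
    hf.antitoneOn hau (hau.trans huv) huv
  exact hlu.trans_lt (hf ht hau htu)

theorem glass_entropy_above_supercooled_liquid_general
    (T0 : ℝ) (a L : ℝ)
    (S S' E' T : ℝ → ℝ)
    (hS : ∀ t ∈ Ici a, HasDerivWithinAt S (S' t) (Ici a) t)
    (hTpos : ∀ t ∈ Ici a, 0 < T t)
    (hE'neg : ∀ t ∈ Ici a, E' t < 0)
    (hsecond1 : ∀ t ∈ Ici a, (1 / T t - 1 / T0) * E' t > 0)
    (hsecond2 : ∀ t ∈ Ici a, (T0 - T t) * S' t > 0)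
    (hlim : Tendsto S atTop (𝓝 L)) :
    ∀ t ∈ Ici a, T t > T0 ∧ S' t < 0 ∧ S t > L := by
  have hT : ∀ t ∈ Ici a, T0 < T t := fun t ht ↦
    lt_of_one_div_lt_one_div (hTpos t ht)
      (sub_neg.1 (neg_of_mul_pos_left (hsecond1 t ht) (hE'neg t ht).le))
  have hS' : ∀ t ∈ Ici a, S' t < 0 := fun t ht ↦
    neg_of_mul_pos_right (hsecond2 t ht) (sub_nonpos.2 (hT t ht).le)
  have hanti : StrictAntiOn S (Ici a) :=
    strictAntiOn_of_hasDerivWithinAt_neg_of_convex (convex_Ici a) hS hS'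
  exact fun t ht ↦ ⟨hT t ht, hS' t ht, hanti.lt_of_tendsto_atTop hlim ht⟩

/-- Theorem 2: during isothermal relaxation at medium temperature T_0, the
instantaneous temperature stays above T_0, the entropy rate is negative, and
the glass entropy stays strictly above the supercooled-liquid entropy L. -/
theorem glass_entropy_above_supercooled_liquid
    (T0 : ℝ) (hT0 : 0 < T0) (a L : ℝ)
    (S E S' E' T : ℝ → ℝ)
    (hS : ∀ t ∈ Ici a, HasDerivWithinAt S (S' t) (Ici a) t)
    (hE : ∀ t ∈ Ici a, HasDerivWithinAt E (E' t) (Ici a) t)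
    (hTpos : ∀ t ∈ Ici a, 0 < T t)
    (hE'neg : ∀ t ∈ Ici a, E' t < 0)
    (hsecond1 : ∀ t ∈ Ici a, (1 / T t - 1 / T0) * E' t > 0)
    (hsecond2 : ∀ t ∈ Ici a, (T0 - T t) * S' t > 0)
    (hlim : Tendsto S atTop (𝓝 L)) :
    ∀ t ∈ Ici a, T t > T0 ∧ S' t < 0 ∧ S t > L :=
  glass_entropy_above_supercooled_liquid_general T0 a L S S' E' T hS hTpos hE'neg hsecond1 hsecond2
    hlim
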